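/- arXiv:2008.09822 — 2 statements merged into one kernel-verified Lean document; each statement's English description precedes it below -/
import Mathlib

section
/- Let n, m, k be positive integers with k ≥ 2n + 2·td(P_m × P_n). Suppose T is an optimal treedepth decomposition of the double broom D_{n,m,k} and d ≥ 1 is an integer such that there exists some 1 ≤ j ≤ m satisfying: (1) top(T,d) ∩ {(i,j) : 1 ≤ i ≤ n} = ∅; (2) for every 1 ≤ i ≤ n, the set V_i consisting of {(i,j') : j < j' ≤ m} together with the vertices of the path on 2^k − 1 vertices attached to (i,m) contains at least one vertex of top(T,d); and (3) for every 1 ≤ i ≤ n, the set U_i consisting of {(i,j') : 1 ≤ j' < j} together with the vertices of the path on 2^k − 1 vertices attached to (i,1) contains at least one vertex of top(T,d). Then d ≥ 2n. -/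
open SimpleGraph

attribute [local instance] Classical.propDecidable

noncomputable section

/-- A rooted forest on a vertex type `V`, given by a parent map together with a
depth function (the depth of a root is `1`, and the depth of a child is the depth
of its parent plus one).  The existence of such a depth function guarantees that
the parent map is acyclic, i.e. that the structure really is a rooted forest. -/
structure RootedForest (V : Type) where
  parent : V → Option V
  depth : V → ℕ
  depth_root : ∀ v, parent v = none → depth v = 1
  depth_parent : ∀ v u, parent v = some u → depth v = depth u + 1

namespace RootedForest

variable {V : Type}

/-- `T.Ancestor u v` means that `u` is a (reflexive) ancestor of `v` in `T`. -/
def Ancestor (T : RootedForest V) (u v : V) : Prop :=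
  Relation.ReflTransGen (fun a b => T.parent a = some b) v u

/-- The height of a rooted forest: the maximum number of vertices on a
root-to-leaf path of one of its trees (0 for the empty forest). -/
def height (T : RootedForest V) [Fintype V] : ℕ :=
  Finset.univ.sup T.depth

/-- The number of children of a vertex. -/
def childCount (T : RootedForest V) [Fintype V] (u : V) : ℕ :=
  (Finset.univ.filter (fun v => T.parent v = some u)).card

/-- The set of vertices of depth at most `d` in `T`. -/
def top (T : RootedForest V) (d : ℕ) : Set V := {v | T.depth v ≤ d}

/-- `T` is a rooted tree if it has exactly one root. -/
def IsTree (T : RootedForest V) : Prop := ∃! r, T.parent r = none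

/-- The top separator of a rooted tree `T`: if no vertex of `T` has more than one
child (i.e. `T` is a path), it is all of `V(T)`; otherwise it is the set of
vertices of depth at most the depth of the minimum-depth vertex having more than
one child. -/
def topSep (T : RootedForest V) [Fintype V] : Finset V :=
  if _ : ∃ p, 2 ≤ T.childCount p then
    Finset.univ.filter
      (fun v => T.depth v ≤ sInf {d | ∃ p, 2 ≤ T.childCount p ∧ T.depth p = d})
  else Finset.univ

end RootedForest

/-- `T` is a treedepth decomposition of `G`: a rooted forest on the vertex set of
`G` such that the endpoints of every edge of `G` are in ancestor-descendant
relation. -/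
def IsTDDecomp {V : Type} (G : SimpleGraph V) (T : RootedForest V) : Prop :=
  ∀ u v, G.Adj u v → T.Ancestor u v ∨ T.Ancestor v u

/-- The treedepth of a finite graph: the minimum height of a treedepth
decomposition of `G`. -/
def treedepth {V : Type} [Fintype V] (G : SimpleGraph V) : ℕ :=
  sInf {h | ∃ T : RootedForest V, IsTDDecomp G T ∧ T.height = h}

/-- `(T, f)` is a tree decomposition of `G`. -/
def IsTreeDecomp {V ι : Type} (G : SimpleGraph V) (T : SimpleGraph ι)
    (f : ι → Finset V) : Prop :=
  T.IsTree ∧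
  (∀ v, ∃ i, v ∈ f i) ∧
  (∀ u v, G.Adj u v → ∃ i, u ∈ f i ∧ v ∈ f i) ∧
  (∀ v, (T.induce {i | v ∈ f i}).Connected)

/-- The treewidth of a finite graph: the minimum over all tree decompositions of
(maximum bag size minus one), phrased as the least `w` such that `G` has a tree
decomposition all of whose bags have at most `w + 1` vertices. -/
def treewidth {V : Type} [Fintype V] (G : SimpleGraph V) : ℕ :=
  sInf {w | ∃ (ι : Type) (_ : Fintype ι) (T : SimpleGraph ι) (f : ι → Finset V),
    IsTreeDecomp G T f ∧ ∀ i, (f i).card ≤ w + 1}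

/-- `S` is an `a`-`b` separator of `G`: `a, b ∉ S` and every walk from `a` to `b`
meets `S` (i.e. `a` and `b` lie in different connected components of `G ∖ S`). -/
def IsABSep {V : Type} (G : SimpleGraph V) (a b : V) (S : Finset V) : Prop :=
  a ∉ S ∧ b ∉ S ∧ ∀ w : G.Walk a b, ∃ x ∈ w.support, x ∈ S

/-- `S` is a minimal separator of `G`: for some vertices `a, b`, it is an
`a`-`b` separator no proper subset of which is an `a`-`b` separator. -/
def IsMinSep {V : Type} (G : SimpleGraph V) (S : Finset V) : Prop :=
  ∃ a b, IsABSep G a b S ∧ ∀ S' ⊂ S, ¬ IsABSep G a b S'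

/-- The grid graph `P_m × P_n`, with vertex set
`{(i,j) : 1 ≤ i ≤ n, 1 ≤ j ≤ m}` and edges between vertices at ℓ1-distance 1. -/
def gridGraph (n m : ℕ) : SimpleGraph (Fin n × Fin m) where
  Adj a b := Nat.dist a.1.val b.1.val + Nat.dist a.2.val b.2.val = 1
  symm := by
    constructor
    intro a b h
    rwa [Nat.dist_comm b.1.val, Nat.dist_comm b.2.val]
  loopless := by constructor; intro a h; simp [Nat.dist_self] at h


/-- Vertices of the broom: grid vertices plus, for each row `i`, a path on `2^k - 1` vertices. -/
abbrev BroomV (n m k : ℕ) : Type := (Fin n × Fin m) ⊕ (Fin n × Fin (2 ^ k - 1))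

/-- The broom `B_{n,m,k}`. -/
def broom (n m k : ℕ) : SimpleGraph (BroomV n m k) :=
  SimpleGraph.fromRel (fun x y =>
    match x, y with
    | .inl a, .inl b => (gridGraph n m).Adj a b
    | .inl a, .inr b => a.1 = b.1 ∧ a.2.val = m - 1 ∧ b.2.val = 0
    | .inr a, .inr b => a.1 = b.1 ∧ a.2.val + 1 = b.2.val
    | .inr _, .inl _ => False)

/-- Vertices of the double broom: grid vertices plus, for each row `i`, a path
attached at `(i,1)` (first summand) and a path attached at `(i,m)` (second summand). -/
abbrev DBroomV (n m k : ℕ) : Type :=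
  (Fin n × Fin m) ⊕ (Fin n × Fin (2 ^ k - 1)) ⊕ (Fin n × Fin (2 ^ k - 1))

/-- The double broom `D_{n,m,k}`. -/
def dbroom (n m k : ℕ) : SimpleGraph (DBroomV n m k) :=
  SimpleGraph.fromRel (fun x y =>
    match x, y with
    | .inl a, .inl b => (gridGraph n m).Adj a b
    | .inl a, .inr (.inl b) => a.1 = b.1 ∧ a.2.val = 0 ∧ b.2.val = 0
    | .inl a, .inr (.inr b) => a.1 = b.1 ∧ a.2.val = m - 1 ∧ b.2.val = 0
    | .inr (.inl a), .inr (.inl b) => a.1 = b.1 ∧ a.2.val + 1 = b.2.val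
    | .inr (.inr a), .inr (.inr b) => a.1 = b.1 ∧ a.2.val + 1 = b.2.val
    | _, _ => False)

/-- Vertices of the graph `G_{n,m,k,l}`: grid vertices, plus a path on `2^k - 1`
vertices for every triple (row `i`, end `e ∈ {1,m}`, vertex `w ∈ W`), plus the
set `W` of `l` new vertices. -/
abbrev CornerV (n m k l : ℕ) : Type :=
  (Fin n × Fin m) ⊕ ((Fin n × Fin 2 × Fin l) × Fin (2 ^ k - 1)) ⊕ Fin l

/-- The graph `G_{n,m,k,l}`. -/
def corner (n m k l : ℕ) : SimpleGraph (CornerV n m k l) :=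
  SimpleGraph.fromRel (fun x y =>
    match x, y with
    | .inl a, .inl b => (gridGraph n m).Adj a b
    | .inl a, .inr (.inl (⟨i, e, _⟩, t)) =>
        a.1 = i ∧ t.val = 0 ∧
          ((e.val = 0 ∧ a.2.val = 0) ∨ (e.val = 1 ∧ a.2.val = m - 1))
    | .inr (.inl (p, t)), .inr (.inl (q, s)) => p = q ∧ t.val + 1 = s.val
    | .inr (.inl (⟨_, _, w⟩, t)), .inr (.inr w') => w = w' ∧ t.val = 2 ^ k - 2
    | _, _ => False)

/-- `H` is a minor of `G`: there are pairwise disjoint connected branch sets in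
`G`, one for each vertex of `H`, such that adjacent vertices of `H` have
adjacent branch sets. -/
def IsMinor {W V : Type} (H : SimpleGraph W) (G : SimpleGraph V) : Prop :=
  ∃ B : W → Set V,
    (∀ w, (G.induce (B w)).Connected) ∧
    (∀ w w', w ≠ w' → Disjoint (B w) (B w')) ∧
    (∀ w w', H.Adj w w' → ∃ u ∈ B w, ∃ v ∈ B w', G.Adj u v)

/-- A graph is chordal if it has no induced cycle of length four or more. -/
def IsChordal {V : Type} (G : SimpleGraph V) : Prop :=
  ∀ c : ℕ, 4 ≤ c → IsEmpty (SimpleGraph.cycleGraph c ↪g G)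

/-- A graph is a cograph if it has no induced path on four vertices. -/
def IsCograph {V : Type} (G : SimpleGraph V) : Prop :=
  IsEmpty (SimpleGraph.pathGraph 4 ↪g G)

/-- A graph is outerplanar iff it contains neither `K₄` nor `K_{2,3}` as a minor. -/
def IsOuterplanar {V : Type} (G : SimpleGraph V) : Prop :=
  ¬ IsMinor (⊤ : SimpleGraph (Fin 4)) G ∧
  ¬ IsMinor (completeBipartiteGraph (Fin 2) (Fin 3)) G

/-- The graph obtained from `G'` and the path on `p` vertices by adding a single
edge between `u ∈ V(G')` and a path vertex `v`. -/
def attachPath {V' : Type} (G' : SimpleGraph V') (p : ℕ) (u : V') (v : Fin p) :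
    SimpleGraph (V' ⊕ Fin p) :=
  SimpleGraph.fromRel (fun x y =>
    match x, y with
    | .inl a, .inl b => G'.Adj a b
    | .inr a, .inr b => a.val + 1 = b.val
    | .inl a, .inr b => a = u ∧ b = v
    | .inr _, .inl _ => False)

/-! In a treedepth decomposition, the image of a connected graph has a vertex that is an ancestor of
all of it (one of minimum depth). For column `j` this gives a vertex `z` deeper than `d` by (1).
For each row `i`, the paths `(i,j) ∪ U_i` and `(i,j) ∪ V_i` meet `top(T,d)` by (2) and (3), so
their topmost vertices lie in `U_i ∩ top(T,d)` and `V_i ∩ top(T,d)` and are ancestors of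
`(i,j)`.
Being shallower than `z`, these `2n` distinct vertices are ancestors of `z`, hence have pairwise
distinct depths in `[1, d]`. -/

namespace RootedForest

variable {V : Type} {T : RootedForest V} {u v w : V}

theorem Ancestor.trans (huv : T.Ancestor u v) (hvw : T.Ancestor v w) : T.Ancestor u w :=
  Relation.ReflTransGen.trans hvw huv

theorem Ancestor.eq_or_depth_lt (h : T.Ancestor u v) : u = v ∨ T.depth u < T.depth v := by
  induction h with
  | refl => exact Or.inl rfl
  | @tail x y _ hxy ih =>
    have := T.depth_parent x y hxy
    right
    rcases ih with rfl | hlt <;> omega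

theorem Ancestor.depth_le (h : T.Ancestor u v) : T.depth u ≤ T.depth v := by
  rcases h.eq_or_depth_lt with rfl | hlt
  exacts [le_rfl, hlt.le]

theorem Ancestor.total (hu : T.Ancestor u w) (hv : T.Ancestor v w) :
    T.Ancestor u v ∨ T.Ancestor v u := by
  induction hu using Relation.ReflTransGen.head_induction_on with
  | refl => exact Or.inr hv
  | @head x y hxy hyw ih =>
    rcases Relation.ReflTransGen.cases_head hv with rfl | ⟨y', hxy', hy'v⟩
    · exact Or.inl (Relation.ReflTransGen.head hxy hyw)
    · cases Option.some_injective _ (hxy.symm.trans hxy')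
      exact ih hy'v

theorem Ancestor.of_depth_le (hu : T.Ancestor u w) (hv : T.Ancestor v w)
    (hle : T.depth u ≤ T.depth v) : T.Ancestor u v := by
  rcases hu.total hv with huv | hvu
  · exact huv
  · rcases hvu.eq_or_depth_lt with rfl | hlt
    exacts [Relation.ReflTransGen.refl, absurd hle (not_le.mpr hlt)]

theorem Ancestor.eq_of_depth_eq (h : T.Ancestor u v) (hd : T.depth u = T.depth v) : u = v :=
  h.eq_or_depth_lt.resolve_right hd.not_lt

theorem one_le_depth (T : RootedForest V) (v : V) : 1 ≤ T.depth v := by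
  cases h : T.parent v with
  | none => exact (T.depth_root v h).ge
  | some u => rw [T.depth_parent v u h]; omega

theorem card_le_of_forall_ancestor {s : Finset V} {d : ℕ} (htop : ∀ a ∈ s, a ∈ T.top d)
    (hanc : ∀ a ∈ s, T.Ancestor a w) : s.card ≤ d := by
  have hinj : Set.InjOn T.depth s := fun a ha b hb hab => by
    rcases (hanc a ha).total (hanc b hb) with h | h
    exacts [h.eq_of_depth_eq hab, (h.eq_of_depth_eq hab.symm).symm]
  calc s.card ≤ (Finset.Icc 1 d).card :=
        Finset.card_le_card_of_injOn T.depth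
          (fun a ha => Finset.mem_Icc.2 ⟨T.one_le_depth a, htop a ha⟩) hinj
    _ = d := by simp

end RootedForest

namespace IsTDDecomp

variable {V W : Type} {G : SimpleGraph V} {T : RootedForest V}

theorem ancestor_of_adj (hT : IsTDDecomp G T) {x w w' : V} (hx : T.Ancestor x w)
    (hadj : G.Adj w w') (hle : T.depth x ≤ T.depth w') : T.Ancestor x w' :=
  (hT w w' hadj).elim hx.trans fun h => hx.of_depth_le h hle

/-- Any vertex of minimum depth works: ancestry propagates along edges to vertices at least as
deep. -/
theorem exists_forall_ancestor (hT : IsTDDecomp G T) {H : SimpleGraph W} [Nonempty W]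
    (φ : H →g G) (hH : H.Preconnected) : ∃ a, ∀ b, T.Ancestor (φ a) (φ b) := by
  let a := Function.argmin (T.depth ∘ φ)
  have propagate {b c : W} (p : H.Walk b c) :
      T.Ancestor (φ a) (φ b) → T.Ancestor (φ a) (φ c) := by
    induction p with
    | nil => exact id
    | cons hadj _ ih =>
      exact fun h =>
        ih (hT.ancestor_of_adj h (φ.map_adj hadj) (Function.argmin_le (T.depth ∘ φ) _))
  exact ⟨a, fun b => propagate (hH a b).some Relation.ReflTransGen.refl⟩

theorem exists_mem_inter_top_ancestor (hT : IsTDDecomp G T) {H : SimpleGraph W} (φ : H →g G)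
    (hH : H.Preconnected) {v : V} {S : Set V} (hφ : Set.range φ = insert v S) {d : ℕ}
    (hv : v ∉ T.top d) (hS : (S ∩ T.top d).Nonempty) :
    ∃ x ∈ S ∩ T.top d, T.Ancestor x v := by
  have hrange : ∀ y ∈ insert v S, ∃ b, φ b = y := fun y hy => by rwa [← hφ] at hy
  obtain ⟨u, huS, hud⟩ := hS
  obtain ⟨b, rfl⟩ := hrange u (Or.inr huS)
  obtain ⟨c, rfl⟩ := hrange v (Or.inl rfl)
  have : Nonempty W := ⟨b⟩
  obtain ⟨a, ha⟩ := hT.exists_forall_ancestor φ hH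
  have had : φ a ∈ T.top d := le_trans (ha b).depth_le hud
  rcases (hφ ▸ Set.mem_range_self a : φ a ∈ insert (φ c) S) with hac | haS
  · exact absurd (hac ▸ had) hv
  · exact ⟨φ a, ⟨haS, had⟩, ha c⟩

end IsTDDecomp

section DoubleBroom

variable {n m k : ℕ}

-- The sets `U_i` and `V_i` of the statement.
def leftArm (i : Fin n) (j : Fin m) : Set (DBroomV n m k) :=
  {x | (∃ j' : Fin m, j'.val < j.val ∧ x = .inl (i, j')) ∨ ∃ t, x = .inr (.inl (i, t))}

def rightArm (i : Fin n) (j : Fin m) : Set (DBroomV n m k) :=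
  {x | (∃ j' : Fin m, j.val < j'.val ∧ x = .inl (i, j')) ∨ ∃ t, x = .inr (.inr (i, t))}

def columnHom (j : Fin m) : pathGraph n →g dbroom n m k where
  toFun i := .inl (i, j)
  map_rel' {a b} h := by
    simp only [pathGraph_adj] at h
    simp only [dbroom, gridGraph, fromRel_adj, Nat.dist, ne_eq, Sum.inl.injEq, Prod.mk.injEq,
      Fin.ext_iff]
    omega

def leftArmHom (i : Fin n) (j : Fin m) : pathGraph (j + 1 + (2 ^ k - 1)) →g dbroom n m k where
  toFun p := if h : p.val ≤ j.val then .inl (i, ⟨j - p, by omega⟩)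
    else .inr (.inl (i, ⟨p - j - 1, by omega⟩))
  map_rel' {a b} h := by
    simp only [pathGraph_adj] at h
    split_ifs <;>
      simp only [dbroom, gridGraph, fromRel_adj, Nat.dist, ne_eq, Sum.inl.injEq, Sum.inr.injEq,
        Prod.mk.injEq, Fin.ext_iff, reduceCtorEq, true_and, not_false_eq_true, false_or,
        or_false] <;>
      omega

def rightArmHom (i : Fin n) (j : Fin m) : pathGraph (m - j + (2 ^ k - 1)) →g dbroom n m k where
  toFun p := if h : p.val < m - j then .inl (i, ⟨j + p, by omega⟩)
    else .inr (.inr (i, ⟨p - (m - j), by omega⟩))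
  map_rel' {a b} h := by
    simp only [pathGraph_adj] at h
    split_ifs <;>
      simp only [dbroom, gridGraph, fromRel_adj, Nat.dist, ne_eq, Sum.inl.injEq, Sum.inr.injEq,
        Prod.mk.injEq, Fin.ext_iff, reduceCtorEq, true_and, not_false_eq_true, false_or,
        or_false] <;>
      omega

theorem leftArmHom_apply (i : Fin n) (j : Fin m) (p : Fin (j + 1 + (2 ^ k - 1))) :
    leftArmHom i j p = if h : p.val ≤ j.val then .inl (i, ⟨j - p, by omega⟩)
      else .inr (.inl (i, ⟨p - j - 1, by omega⟩)) := rfl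

theorem range_leftArmHom (i : Fin n) (j : Fin m) :
    Set.range (leftArmHom (k := k) i j) = insert (.inl (i, j)) (leftArm i j) := by
  ext x
  constructor
  · rintro ⟨p, rfl⟩
    rw [leftArmHom_apply]
    split_ifs with h
    · rcases Nat.eq_zero_or_pos p.val with hp | hp
      · left; simp [hp]
      · exact Or.inr (Or.inl ⟨_, show j.val - p.val < j.val by omega, rfl⟩)
    · exact Or.inr (Or.inr ⟨_, rfl⟩)
  · rintro (rfl | ⟨j', hj', rfl⟩ | ⟨t, rfl⟩)
    · exact ⟨⟨0, by omega⟩, by simp [leftArmHom_apply]⟩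
    · exact ⟨⟨j - j', by omega⟩, by
        rw [leftArmHom_apply, dif_pos (by rw [Fin.val_mk]; omega)]
        simp only [Sum.inl.injEq, Prod.mk.injEq, Fin.ext_iff, true_and]
        omega⟩
    · exact ⟨⟨j + 1 + t, by omega⟩, by
        rw [leftArmHom_apply, dif_neg (by rw [Fin.val_mk]; omega)]
        simp only [Sum.inr.injEq, Sum.inl.injEq, Prod.mk.injEq, Fin.ext_iff, true_and]
        omega⟩

theorem rightArmHom_apply (i : Fin n) (j : Fin m) (p : Fin (m - j + (2 ^ k - 1))) :
    rightArmHom i j p = if h : p.val < m - j then .inl (i, ⟨j + p, by omega⟩)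
      else .inr (.inr (i, ⟨p - (m - j), by omega⟩)) := rfl

theorem range_rightArmHom (i : Fin n) (j : Fin m) :
    Set.range (rightArmHom (k := k) i j) = insert (.inl (i, j)) (rightArm i j) := by
  ext x
  constructor
  · rintro ⟨p, rfl⟩
    rw [rightArmHom_apply]
    split_ifs with h
    · rcases Nat.eq_zero_or_pos p.val with hp | hp
      · left; simp [hp]
      · exact Or.inr (Or.inl ⟨_, show j.val < j.val + p.val by omega, rfl⟩)
    · exact Or.inr (Or.inr ⟨_, rfl⟩)
  · rintro (rfl | ⟨j', hj', rfl⟩ | ⟨t, rfl⟩)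
    · exact ⟨⟨0, by omega⟩, by simp [rightArmHom_apply]⟩
    · exact ⟨⟨j' - j, by omega⟩, by
        rw [rightArmHom_apply, dif_pos (by rw [Fin.val_mk]; omega)]
        simp only [Sum.inl.injEq, Prod.mk.injEq, Fin.ext_iff, true_and]
        omega⟩
    · exact ⟨⟨m - j + t, by omega⟩, by
        rw [rightArmHom_apply, dif_neg (by rw [Fin.val_mk]; omega)]
        simp⟩

theorem leftArm_inter_top_nonempty {T : RootedForest (DBroomV n m k)} {d : ℕ} {i : Fin n}
    {j : Fin m}
    (h : (∃ j' : Fin m, j'.val < j.val ∧ (.inl (i, j') : DBroomV n m k) ∈ T.top d) ∨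
      ∃ t, (.inr (.inl (i, t)) : DBroomV n m k) ∈ T.top d) :
    (leftArm i j ∩ T.top d).Nonempty := by
  rcases h with ⟨j', hj', hu⟩ | ⟨t, hu⟩
  exacts [⟨_, Or.inl ⟨j', hj', rfl⟩, hu⟩, ⟨_, Or.inr ⟨t, rfl⟩, hu⟩]

theorem rightArm_inter_top_nonempty {T : RootedForest (DBroomV n m k)} {d : ℕ} {i : Fin n}
    {j : Fin m}
    (h : (∃ j' : Fin m, j.val < j'.val ∧ (.inl (i, j') : DBroomV n m k) ∈ T.top d) ∨
      ∃ t, (.inr (.inr (i, t)) : DBroomV n m k) ∈ T.top d) :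
    (rightArm i j ∩ T.top d).Nonempty := by
  rcases h with ⟨j', hj', hu⟩ | ⟨t, hu⟩
  exacts [⟨_, Or.inl ⟨j', hj', rfl⟩, hu⟩, ⟨_, Or.inr ⟨t, rfl⟩, hu⟩]

def dbroomRow : DBroomV n m k → Fin n
  | .inl x | .inr (.inl x) | .inr (.inr x) => x.1

theorem dbroomRow_of_mem_leftArm {i : Fin n} {j : Fin m} {x : DBroomV n m k}
    (hx : x ∈ leftArm i j) : dbroomRow x = i := by
  rcases hx with ⟨_, _, rfl⟩ | ⟨_, rfl⟩ <;> rfl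

theorem dbroomRow_of_mem_rightArm {i : Fin n} {j : Fin m} {x : DBroomV n m k}
    (hx : x ∈ rightArm i j) : dbroomRow x = i := by
  rcases hx with ⟨_, _, rfl⟩ | ⟨_, rfl⟩ <;> rfl

theorem disjoint_leftArm_rightArm (i i' : Fin n) (j : Fin m) :
    Disjoint (leftArm (k := k) i j) (rightArm i' j) := by
  refine Set.disjoint_left.2 fun x hl hr => ?_
  rcases hl with ⟨_, _, rfl⟩ | ⟨_, rfl⟩ <;> rcases hr with ⟨_, _, h⟩ | ⟨_, h⟩ <;>
    simp only [Sum.inl.injEq, Sum.inr.injEq, Prod.mk.injEq, reduceCtorEq] at h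
  omega

theorem injective_sumElim_of_mem_arms {j : Fin m} {uL uR : Fin n → DBroomV n m k}
    (hL : ∀ i, uL i ∈ leftArm i j) (hR : ∀ i, uR i ∈ rightArm i j) :
    (Sum.elim uL uR).Injective :=
  .sumElim
    (fun i i' h => (dbroomRow_of_mem_leftArm (hL i)).symm.trans
      (h ▸ dbroomRow_of_mem_leftArm (hL i')))
    (fun i i' h => (dbroomRow_of_mem_rightArm (hR i)).symm.trans
      (h ▸ dbroomRow_of_mem_rightArm (hR i')))
    fun i i' => (disjoint_leftArm_rightArm i i' j).ne_of_mem (hL i) (hR i')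

end DoubleBroom

theorem statement9_general (n m k : ℕ)
    (T : RootedForest (DBroomV n m k)) (hT : IsTDDecomp (dbroom n m k) T)
    (d : ℕ)
    (h : ∃ j : Fin m,
      (∀ i : Fin n, (Sum.inl (i, j) : DBroomV n m k) ∉ T.top d) ∧
      (∀ i : Fin n,
        (∃ j' : Fin m, j.val < j'.val ∧ (Sum.inl (i, j') : DBroomV n m k) ∈ T.top d) ∨
        (∃ t : Fin (2 ^ k - 1), (Sum.inr (Sum.inr (i, t)) : DBroomV n m k) ∈ T.top d)) ∧
      (∀ i : Fin n,
        (∃ j' : Fin m, j'.val < j.val ∧ (Sum.inl (i, j') : DBroomV n m k) ∈ T.top d) ∨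
        (∃ t : Fin (2 ^ k - 1), (Sum.inr (Sum.inl (i, t)) : DBroomV n m k) ∈ T.top d))) :
    2 * n ≤ d := by
  obtain ⟨j, hcol, hright, hleft⟩ := h
  rcases n.eq_zero_or_pos with rfl | hn
  · omega
  have : Nonempty (Fin n) := ⟨⟨0, hn⟩⟩
  obtain ⟨c, hc⟩ := hT.exists_forall_ancestor (columnHom j) (pathGraph_preconnected n)
  have hz : d < T.depth (.inl (c, j)) := not_le.1 (hcol c)
  choose uL huL hLanc using fun i => hT.exists_mem_inter_top_ancestor _
    (pathGraph_preconnected _) (range_leftArmHom i j) (hcol i)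
    (leftArm_inter_top_nonempty (hleft i))
  choose uR huR hRanc using fun i => hT.exists_mem_inter_top_ancestor _
    (pathGraph_preconnected _) (range_rightArmHom i j) (hcol i)
    (rightArm_inter_top_nonempty (hright i))
  have hanc : ∀ q, T.Ancestor (Sum.elim uL uR q) (.inl (c, j))
    | .inl i => (hLanc i).of_depth_le (hc i) (le_trans (huL i).2 hz.le)
    | .inr i => (hRanc i).of_depth_le (hc i) (le_trans (huR i).2 hz.le)
  have htop : ∀ q, Sum.elim uL uR q ∈ T.top d
    | .inl i => (huL i).2
    | .inr i => (huR i).2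
  have hcard := T.card_le_of_forall_ancestor (s := Finset.univ.image (Sum.elim uL uR))
    (Finset.forall_mem_image.2 fun q _ => htop q) (Finset.forall_mem_image.2 fun q _ => hanc q)
  rwa [Finset.card_image_of_injective _ (injective_sumElim_of_mem_arms (fun i => (huL i).1)
    fun i => (huR i).1), Finset.card_univ, Fintype.card_sum, Fintype.card_fin, ← two_mul] at hcard

/-- Let `k ≥ 2n + 2·td(P_m × P_n)`, let `T` be an optimal treedepth
decomposition of the double broom `D_{n,m,k}`, and let `d ≥ 1` be such that for
some column `j`: (1) column `j` is disjoint from `top(T,d)`; (2) for every row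
`i`, the set `V_i` (grid vertices `(i,j')` with `j' > j` together with the path
attached to `(i,m)`) meets `top(T,d)`; and (3) for every row `i`, the set `U_i`
(grid vertices `(i,j')` with `j' < j` together with the path attached to
`(i,1)`) meets `top(T,d)`.  Then `d ≥ 2n`. -/
theorem statement9 (n m k : ℕ) (hn : 0 < n) (hm : 0 < m) (hk0 : 0 < k)
    (hk : 2 * n + 2 * treedepth (gridGraph n m) ≤ k)
    (T : RootedForest (DBroomV n m k)) (hT : IsTDDecomp (dbroom n m k) T)
    (hopt : T.height = treedepth (dbroom n m k))
    (d : ℕ) (hd : 1 ≤ d)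
    (h : ∃ j : Fin m,
      (∀ i : Fin n, (Sum.inl (i, j) : DBroomV n m k) ∉ T.top d) ∧
      (∀ i : Fin n,
        (∃ j' : Fin m, j.val < j'.val ∧ (Sum.inl (i, j') : DBroomV n m k) ∈ T.top d) ∨
        (∃ t : Fin (2 ^ k - 1), (Sum.inr (Sum.inr (i, t)) : DBroomV n m k) ∈ T.top d)) ∧
      (∀ i : Fin n,
        (∃ j' : Fin m, j'.val < j.val ∧ (Sum.inl (i, j') : DBroomV n m k) ∈ T.top d) ∨
        (∃ t : Fin (2 ^ k - 1), (Sum.inr (Sum.inl (i, t)) : DBroomV n m k) ∈ T.top d))) :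
    2 * n ≤ d :=
  statement9_general n m k T hT d h
end
end

section
/- Let n, m, k, l be positive integers with m ≥ n. Then the treewidth of G_{n,m,k,l} is at most n + l. -/
open SimpleGraph

attribute [local instance] Classical.propDecidable

noncomputable section

/-!
Read the grid column by column, so that `(i, j)` sits at position `i + n j`. Every grid edge
joins positions at most `n` apart, hence the windows of `n + 1` consecutive positions, strung
along a path and each enlarged by `W`, form a tree decomposition of the grid plus `W` with bags
of size at most `n + l + 1`. A pendant path towards `w ∈ W` is then covered vertex by vertex by
the bags `{x, predecessor of x, w}`, hung as a path below the window starting at its grid end.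
-/

namespace RootedForest

variable {V : Type} (T : RootedForest V)

def graph : SimpleGraph V where
  Adj a b := T.parent a = some b ∨ T.parent b = some a
  symm := ⟨fun _ _ h => h.symm⟩
  loopless := ⟨fun a h => by rcases h with h | h <;> have := T.depth_parent a a h <;> omega⟩

theorem graph_adj_of_parent {a b : V} (h : T.parent a = some b) : T.graph.Adj a b := Or.inl h

variable {T}

theorem depth_le_of_ancestor {u v : V} (h : T.Ancestor u v) : T.depth u ≤ T.depth v := by
  induction h with
  | refl => rfl
  | tail _ hpar ih => have := T.depth_parent _ _ hpar; omega

theorem induce_connected_of_parent_mem {S : Set V} {r : V} (hr : r ∈ S)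
    (hS : ∀ i ∈ S, i ≠ r → ∃ j ∈ S, T.parent i = some j) :
    (T.graph.induce S).Connected := by
  have reach : ∀ d, ∀ x (hx : x ∈ S), T.depth x = d →
      (T.graph.induce S).Reachable ⟨r, hr⟩ ⟨x, hx⟩ := by
    intro d
    induction d using Nat.strong_induction_on with
    | _ d ih =>
      intro x hx hd
      by_cases hxr : x = r
      · subst hxr; rfl
      obtain ⟨j, hj, hpar⟩ := hS x hx hxr
      have hadj : (T.graph.induce S).Adj ⟨j, hj⟩ ⟨x, hx⟩ := Or.inr hpar
      have := T.depth_parent x j hpar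
      exact (ih _ (by omega) j hj rfl).trans hadj.reachable
  exact (connected_iff_exists_forall_reachable _).2 ⟨⟨r, hr⟩, fun x => reach _ x.1 x.2 rfl⟩

theorem graph_connected (hT : T.IsTree) : T.graph.Connected := by
  obtain ⟨r, hr, hr_unique⟩ := hT
  refine (induceUnivIso T.graph).connected_iff.1 (induce_connected_of_parent_mem (r := r) trivial ?_)
  intro i _ hir
  cases hi : T.parent i with
  | none => exact absurd (hr_unique i hi) hir
  | some j => exact ⟨j, trivial, rfl⟩

theorem ancestor_of_reachable_deleteEdges {a b x : V} (hab : T.parent a = some b)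
    (hx : (T.graph.deleteEdges {s(a, b)}).Reachable a x) : T.Ancestor a x := by
  rw [reachable_iff_reflTransGen] at hx
  induction hx with
  | refl => exact .refl
  | @tail y z _ hyz ih =>
    obtain ⟨hyz | hzy, hne⟩ := hyz
    · rcases Relation.ReflTransGen.cases_head ih with rfl | ⟨c, hyc, hca⟩
      · rw [hab] at hyz
        cases hyz
        exact absurd ⟨rfl, T.graph.ne_of_adj (T.graph_adj_of_parent hab)⟩ hne
      · rw [hyz] at hyc
        cases hyc
        exact hca
    · exact .head hzy ih

theorem graph_isAcyclic : T.graph.IsAcyclic := by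
  have bridge : ∀ {a b}, T.parent a = some b → T.graph.IsBridge s(a, b) := by
    intro a b hab
    rw [isBridge_iff]
    intro hreach
    have h1 := depth_le_of_ancestor (ancestor_of_reachable_deleteEdges hab hreach)
    have h2 := T.depth_parent a b hab
    omega
  rw [isAcyclic_iff_forall_adj_isBridge]
  rintro a b (hab | hba)
  · exact bridge hab
  · rw [Sym2.eq_swap]; exact bridge hba

theorem graph_isTree (hT : T.IsTree) : T.graph.IsTree :=
  ⟨graph_connected hT, graph_isAcyclic⟩

theorem isTreeDecomp_of_parent_mem {ι : Type} {G : SimpleGraph V} {T : RootedForest ι}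
    (hT : T.IsTree) {f : ι → Finset V} (top : V → ι) (mem_top : ∀ v, v ∈ f (top v))
    (mem_parent : ∀ v i, v ∈ f i → i ≠ top v → ∃ j, v ∈ f j ∧ T.parent i = some j)
    (adj_mem : ∀ u v, G.Adj u v → ∃ i, u ∈ f i ∧ v ∈ f i) :
    IsTreeDecomp G T.graph f :=
  ⟨graph_isTree hT, fun v => ⟨top v, mem_top v⟩, adj_mem,
    fun v => induce_connected_of_parent_mem (mem_top v) (mem_parent v)⟩

end RootedForest

theorem treewidth_le_of_isTreeDecomp {V ι : Type} [Fintype V] [Fintype ι] {G : SimpleGraph V}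
    {T : SimpleGraph ι} {f : ι → Finset V} (hf : IsTreeDecomp G T f) {w : ℕ}
    (hw : ∀ i, (f i).card ≤ w + 1) : treewidth G ≤ w :=
  Nat.sInf_le ⟨ι, inferInstance, T, f, hf, hw⟩

def spineWithPaths (N p : ℕ) {Q : Type} (a : Q → Fin N) : RootedForest (Fin N ⊕ Q × Fin p) where
  parent
    | .inl ⟨0, _⟩ => none
    | .inl ⟨s + 1, _⟩ => some (.inl ⟨s, by omega⟩)
    | .inr (q, ⟨0, _⟩) => some (.inl (a q))
    | .inr (q, ⟨t + 1, _⟩) => some (.inr (q, ⟨t, by omega⟩))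
  depth
    | .inl s => s + 1
    | .inr (q, t) => a q + t + 2
  depth_root := by
    rintro (⟨_ | s, hs⟩ | ⟨q, ⟨_ | t, ht⟩⟩) h <;> simp_all
  depth_parent := by
    rintro (⟨_ | s, hs⟩ | ⟨q, ⟨_ | t, ht⟩⟩) x h <;> cases h <;> rfl

theorem spineWithPaths_isTree {N p : ℕ} {Q : Type} (a : Q → Fin N) (hN : 0 < N) :
    (spineWithPaths N p a).IsTree := by
  refine ⟨.inl ⟨0, hN⟩, rfl, ?_⟩
  rintro (⟨_ | s, hs⟩ | ⟨q, ⟨_ | t, ht⟩⟩) h <;> simp_all [spineWithPaths]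

section Corner

variable {n m k l : ℕ}

def gridPos (v : Fin n × Fin m) : Fin (m * n) := finProdFinEquiv (v.2, v.1)

theorem gridPos_val (v : Fin n × Fin m) : (gridPos v : ℕ) = v.1 + n * v.2 := rfl

theorem gridPos_injective : Function.Injective (gridPos : Fin n × Fin m → Fin (m * n)) :=
  fun _ _ h => Prod.swap_injective (finProdFinEquiv.injective h)

theorem gridPos_le_add_of_adj {u v : Fin n × Fin m} (h : (gridGraph n m).Adj u v) :
    (gridPos u : ℕ) ≤ gridPos v + n := by
  have hd : Nat.dist u.1 v.1 + Nat.dist u.2 v.2 = 1 := h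
  simp only [Nat.dist] at hd
  have := v.1.isLt
  rw [gridPos_val, gridPos_val]
  rcases le_or_gt (u.2 : ℕ) v.2 with h2 | h2
  · have := Nat.mul_le_mul_left n h2
    omega
  · rw [show (u.2 : ℕ) = v.2 + 1 by omega, Nat.mul_succ]
    omega

def endColumn (hm : 0 < m) (e : Fin 2) : Fin m := if e = 0 then ⟨0, hm⟩ else ⟨m - 1, by omega⟩

def anchor (hm : 0 < m) (q : Fin n × Fin 2 × Fin l) : Fin n × Fin m := (q.1, endColumn hm q.2.1)

theorem eq_anchor {hm : 0 < m} {a : Fin n × Fin m} {q : Fin n × Fin 2 × Fin l}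
    (h : a.1 = q.1 ∧ ((q.2.1.val = 0 ∧ a.2.val = 0) ∨ (q.2.1.val = 1 ∧ a.2.val = m - 1))) :
    a = anchor hm q := by
  refine Prod.ext h.1 (Fin.ext ?_)
  rcases h.2 with ⟨he, ha⟩ | ⟨he, ha⟩ <;>
    simp [anchor, endColumn, Fin.ext_iff, he, ha]

theorem corner_adj_induction {hm : 0 < m} (P : CornerV n m k l → CornerV n m k l → Prop)
    (symm : ∀ x y, P x y → P y x)
    (grid : ∀ u v, (gridGraph n m).Adj u v → P (.inl u) (.inl v))
    (start : ∀ q t, t.val = 0 → P (.inl (anchor hm q)) (.inr (.inl (q, t))))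
    (step : ∀ q t s, t.val + 1 = s.val → P (.inr (.inl (q, t))) (.inr (.inl (q, s))))
    (apex : ∀ q t, t.val = 2 ^ k - 2 → P (.inr (.inl (q, t))) (.inr (.inr q.2.2))) :
    ∀ x y, (corner n m k l).Adj x y → P x y := by
  rintro (u | ⟨q, t⟩ | w) (v | ⟨q', t'⟩ | w') ⟨-, h⟩ <;>
    simp only [or_false, false_or, or_self] at h
  case inl.inl => exact grid u v (h.elim id (·.symm))
  case inl.inr.inl => exact eq_anchor (hm := hm) ⟨h.1, h.2.2⟩ ▸ start q' t' h.2.1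
  case inr.inl.inl => exact symm _ _ (eq_anchor (hm := hm) ⟨h.1, h.2.2⟩ ▸ start q t h.2.1)
  case inr.inl.inr.inl =>
    obtain ⟨rfl, h⟩ | ⟨rfl, h⟩ := h
    · exact step _ t t' h
    · exact symm _ _ (step _ t' t h)
  case inr.inl.inr.inr =>
    obtain ⟨rfl, h⟩ := h
    exact apex _ _ h
  case inr.inr.inr.inl =>
    obtain ⟨rfl, h⟩ := h
    exact symm _ _ (apex _ _ h)

abbrev CornerNode (n m k l : ℕ) : Type := Fin (m * n) ⊕ (Fin n × Fin 2 × Fin l) × Fin (2 ^ k - 1)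

def cornerForest (hm : 0 < m) : RootedForest (CornerNode n m k l) :=
  spineWithPaths (m * n) (2 ^ k - 1) fun q => gridPos (anchor hm q)

def gridWindow (s : Fin (m * n)) : Finset (Fin n × Fin m) :=
  Finset.univ.filter fun v => (s : ℕ) ≤ gridPos v ∧ (gridPos v : ℕ) ≤ s + n

theorem card_gridWindow_le (s : Fin (m * n)) : (gridWindow s).card ≤ n + 1 := by
  calc (gridWindow s).card ≤ (Finset.Icc (s : ℕ) (s + n)).card := by
        refine Finset.card_le_card_of_injOn (fun v => (gridPos v : ℕ)) ?_ ?_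
        · intro v hv
          rw [Finset.mem_coe, Finset.mem_Icc]
          exact (Finset.mem_filter.1 hv).2
        · intro u _ v _ h
          exact gridPos_injective (Fin.ext h)
    _ = n + 1 := by rw [Nat.card_Icc]; omega

def spineBag (s : Fin (m * n)) : Finset (CornerV n m k l) :=
  (gridWindow s).disjSum (Finset.disjSum ∅ Finset.univ)

@[simp] theorem inl_mem_spineBag {s : Fin (m * n)} {v : Fin n × Fin m} :
    (.inl v : CornerV n m k l) ∈ spineBag s ↔ (s : ℕ) ≤ gridPos v ∧ (gridPos v : ℕ) ≤ s + n := by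
  rw [spineBag, Finset.inl_mem_disjSum, gridWindow, Finset.mem_filter_univ]

@[simp] theorem inr_inl_notMem_spineBag {s : Fin (m * n)} {c} :
    (.inr (.inl c) : CornerV n m k l) ∉ spineBag s := by
  simp [spineBag]

@[simp] theorem inr_inr_mem_spineBag {s : Fin (m * n)} {w : Fin l} :
    (.inr (.inr w) : CornerV n m k l) ∈ spineBag s := by
  simp [spineBag]

def pathPred (hm : 0 < m) : (Fin n × Fin 2 × Fin l) × Fin (2 ^ k - 1) → CornerV n m k l
  | (q, ⟨0, _⟩) => .inl (anchor hm q)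
  | (q, ⟨t + 1, _⟩) => .inr (.inl (q, ⟨t, by omega⟩))

def pathBag (hm : 0 < m) (c : (Fin n × Fin 2 × Fin l) × Fin (2 ^ k - 1)) :
    Finset (CornerV n m k l) :=
  {.inr (.inl c), .inr (.inr c.1.2.2), pathPred hm c}

def cornerBag (hm : 0 < m) : CornerNode n m k l → Finset (CornerV n m k l) :=
  Sum.elim spineBag (pathBag hm)

def cornerTop (hn : 0 < n) (hm : 0 < m) : CornerV n m k l → CornerNode n m k l
  -- the first window containing `v`; the subtraction truncates to `0` near the start
  | .inl v => .inl ⟨gridPos v - n, by have := (gridPos v).isLt; omega⟩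
  | .inr (.inl c) => .inr c
  | .inr (.inr _) => .inl ⟨0, Nat.mul_pos hm hn⟩

theorem cornerBag_mem_parent (hn : 0 < n) (hm : 0 < m) (x : CornerV n m k l)
    (i : CornerNode n m k l) (hx : x ∈ cornerBag hm i) (hi : i ≠ cornerTop hn hm x) :
    ∃ j, x ∈ cornerBag hm j ∧ (cornerForest hm).parent i = some j := by
  rcases x with v | c | w <;> rcases i with ⟨_ | s, hs⟩ | ⟨q, ⟨_ | t, ht⟩⟩ <;>
    simp only [cornerBag, cornerTop, pathBag, pathPred, Sum.elim_inl, Sum.elim_inr,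
      inl_mem_spineBag, inr_inl_notMem_spineBag, inr_inr_mem_spineBag, Finset.mem_insert,
      Finset.mem_singleton, reduceCtorEq, Sum.inl.injEq, Sum.inr.injEq, Fin.mk.injEq, ne_eq,
      zero_le, zero_add, true_and, Order.add_one_le_iff, false_or, or_false, or_self,
      not_false_eq_true, not_true_eq_false, Nat.add_eq_zero_iff, one_ne_zero, and_false] at hx hi
  case inl.inl.zero => omega
  case inl.inl.succ =>
    exact ⟨.inl ⟨s, by omega⟩, by simp only [cornerBag, Sum.elim_inl, inl_mem_spineBag]; omega, rfl⟩
  case inl.inr.zero =>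
    exact ⟨.inl (gridPos (anchor hm q)), by simp [cornerBag, hx], rfl⟩
  case inr.inl.inr.zero => exact absurd hx.symm hi
  case inr.inl.inr.succ =>
    obtain rfl | rfl := hx
    · exact absurd rfl hi
    · exact ⟨.inr _, by simp [cornerBag, pathBag], rfl⟩
  case inr.inr.inl.succ => exact ⟨.inl ⟨s, by omega⟩, by simp [cornerBag], rfl⟩
  case inr.inr.inr.zero => exact ⟨.inl _, by simp [cornerBag], rfl⟩
  case inr.inr.inr.succ => exact ⟨.inr (q, ⟨t, by omega⟩), by simp [cornerBag, pathBag, hx], rfl⟩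

theorem cornerBag_mem_top (hn : 0 < n) (hm : 0 < m) (x : CornerV n m k l) :
    x ∈ cornerBag hm (cornerTop hn hm x) := by
  rcases x with v | c | w
  · simp only [cornerBag, cornerTop, Sum.elim_inl, inl_mem_spineBag]
    omega
  · simp [cornerBag, cornerTop, pathBag]
  · simp [cornerBag, cornerTop]

theorem cornerBag_adj_mem (hm : 0 < m) (x y : CornerV n m k l) (h : (corner n m k l).Adj x y) :
    ∃ i, x ∈ cornerBag hm i ∧ y ∈ cornerBag hm i := by
  refine corner_adj_induction (hm := hm) (fun x y => ∃ i, x ∈ cornerBag hm i ∧ y ∈ cornerBag hm i)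
    ?_ ?_ ?_ ?_ ?_ x y h
  · rintro x y ⟨i, hx, hy⟩
    exact ⟨i, hy, hx⟩
  · intro u v huv
    have huv' := gridPos_le_add_of_adj huv
    have hvu' := gridPos_le_add_of_adj huv.symm
    rcases le_total (gridPos u : ℕ) (gridPos v) with hle | hle
    · exact ⟨.inl (gridPos u), by simp only [cornerBag, Sum.elim_inl, inl_mem_spineBag]; omega⟩
    · exact ⟨.inl (gridPos v), by simp only [cornerBag, Sum.elim_inl, inl_mem_spineBag]; omega⟩
  · rintro q ⟨_ | t, ht⟩ h0
    · exact ⟨.inr (q, ⟨0, ht⟩), by simp [cornerBag, pathBag, pathPred]⟩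
    · simp at h0
  · rintro q t ⟨_ | s, hs⟩ h
    · simp at h
    · obtain rfl : t = ⟨s, Nat.lt_of_succ_lt hs⟩ := Fin.ext (by simpa using h)
      exact ⟨.inr (q, ⟨s + 1, hs⟩), by simp [cornerBag, pathBag, pathPred]⟩
  · intro q t _
    exact ⟨.inr (q, t), by simp [cornerBag, pathBag]⟩

theorem card_cornerBag_le (hn : 0 < n) (hm : 0 < m) (i : CornerNode n m k l) :
    (cornerBag hm i).card ≤ n + l + 1 := by
  rcases i with s | c
  · calc (spineBag s).card = (gridWindow s).card + l := by simp [spineBag]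
      _ ≤ n + l + 1 := by have := card_gridWindow_le s; omega
  · have := c.1.2.2.isLt
    calc (pathBag hm c).card ≤ 3 := Finset.card_le_three
      _ ≤ n + l + 1 := by omega

theorem isTreeDecomp_cornerBag (hn : 0 < n) (hm : 0 < m) :
    IsTreeDecomp (corner n m k l) (cornerForest hm).graph (cornerBag hm) :=
  RootedForest.isTreeDecomp_of_parent_mem (spineWithPaths_isTree _ (Nat.mul_pos hm hn))
    (cornerTop hn hm) (cornerBag_mem_top hn hm) (cornerBag_mem_parent hn hm) (cornerBag_adj_mem hm)

end Corner

theorem statement12_general (n m k l : ℕ) (hn : 0 < n) (hm : n ≤ m) :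
    treewidth (corner n m k l) ≤ n + l :=
  have hm₀ : 0 < m := hn.trans_le hm
  treewidth_le_of_isTreeDecomp (isTreeDecomp_cornerBag hn hm₀) (card_cornerBag_le hn hm₀)

/-- For positive integers `n, m, k, l` with `m ≥ n`, the treewidth
of `G_{n,m,k,l}` is at most `n + l`. -/
theorem statement12 (n m k l : ℕ) (hn : 0 < n) (hk : 0 < k) (hl : 0 < l)
    (hm : n ≤ m) :
    treewidth (corner n m k l) ≤ n + l :=
  statement12_general n m k l hn hm
end
end
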